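/- Let A be a Banach algebra with nonzero multiplicative continuous functional e and P = {ν ∈ A : e(ν) = 1, ‖ν‖ = 1}, nonempty and closed under multiplication. Suppose A is 'topological right stationary': there is a net (ν_α) in P such that for each φ ∈ A* there is c₀ ∈ ℂ with R_{ν_α} φ → c₀·e in the weak* topology of A*, where (R_ν φ)(μ) = φ(μν). Then for every μ ∈ A with inf{‖μν‖ : ν ∈ P} ≠ 0, we have |e(μ)| = inf {‖μ ν‖ : ν ∈ P}. -/

import Mathlib

/-!
Write `ζ` for the infimum. Multiplicative functionals are contractive, so
`|e μ| = |e (μ ν)| ≤ ‖μ ν‖` for `ν ∈ P`, i.e. `|e μ| ≤ ζ`. Conversely, contractivity also makes `P`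
convex (it is `e⁻¹{1}` intersected with the unit ball), so Hahn–Banach separates the convex set
`μ P` from the open ball of radius `ζ` by some `ψ ∈ A*` with `‖ψ‖ ≤ 1` and `|ψ| ≥ ζ` on `μ P`.
Stationarity gives `ψ (μ ν_α) → c₀ e(μ)`, hence `ζ ≤ |c₀| |e μ|`, and `|c₀| ≤ 1` by testing the
same limit on an element of `P`.
-/

open Filter Topology

/-- If `‖e x‖ > ‖x‖`, then `y = x / e x` satisfies `e (y ^ n) = 1` for `n ≥ 1` although
`y ^ n → 0`. -/
theorem ContinuousLinearMap.norm_apply_le_of_map_mul {𝕜 A : Type*} [NontriviallyNormedField 𝕜]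
    [NormedRing A] [NormedAlgebra 𝕜 A] (e : A →L[𝕜] 𝕜)
    (hmul : ∀ a b : A, e (a * b) = e a * e b) (x : A) : ‖e x‖ ≤ ‖x‖ := by
  by_contra! h
  have hex : e x ≠ 0 := norm_pos_iff.mp ((norm_nonneg x).trans_lt h)
  set y : A := (e x)⁻¹ • x
  have hy : ‖y‖ < 1 := by
    rwa [norm_smul, norm_inv, inv_mul_lt_iff₀ (norm_pos_iff.mpr hex), mul_one]
  have hy1 : e y = 1 := by simp [y, hex]
  have hpow : ∀ n : ℕ, e (y ^ (n + 1)) = 1 := by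
    intro n
    induction n with
    | zero => rwa [zero_add, pow_one]
    | succ k ih => rw [pow_succ, hmul, ih, hy1, one_mul]
  have hlim : Tendsto (fun n : ℕ => e (y ^ (n + 1))) atTop (𝓝 0) := by
    simpa [Function.comp_def] using (e.continuous.tendsto 0).comp
      ((tendsto_pow_atTop_nhds_zero_of_norm_lt_one hy).comp (tendsto_add_atTop_nat 1))
  simp only [hpow, tendsto_const_nhds_iff] at hlim
  exact one_ne_zero hlim

theorem convex_setOf_apply_eq_one_and_norm_eq_one {𝕜 E : Type*} [RCLike 𝕜]
    [NormedAddCommGroup E] [NormedSpace 𝕜 E] [NormedSpace ℝ E] [IsScalarTower ℝ 𝕜 E]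
    (e : E →L[𝕜] 𝕜) (he : ∀ x, ‖e x‖ ≤ ‖x‖) :
    Convex ℝ {ν : E | e ν = 1 ∧ ‖ν‖ = 1} := by
  have hset : {ν : E | e ν = 1 ∧ ‖ν‖ = 1} = e ⁻¹' {1} ∩ Metric.closedBall 0 1 := by
    ext ν
    simp only [Set.mem_ofPred_eq, Set.mem_inter_iff, Set.mem_preimage, Set.mem_singleton_iff,
      mem_closedBall_zero_iff]
    refine ⟨fun h => ⟨h.1, h.2.le⟩, fun h => ⟨h.1, h.2.antisymm ?_⟩⟩
    simpa [h.1] using he ν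
  rw [hset]
  exact ((convex_singleton 1).linear_preimage (e.toLinearMap.restrictScalars ℝ)).inter
    (convex_closedBall 0 1)

theorem exists_norm_le_one_forall_le_apply_of_convex {E : Type*} [NormedAddCommGroup E]
    [NormedSpace ℝ E] {T : Set E} (hT : Convex ℝ T) {r : ℝ} (hr : ∀ x ∈ T, r ≤ ‖x‖) :
    ∃ f : StrongDual ℝ E, ‖f‖ ≤ 1 ∧ ∀ x ∈ T, r ≤ f x := by
  rcases le_or_gt r 0 with hr0 | hr0
  · exact ⟨0, by simp, fun _ _ => by simpa using hr0⟩
  have hdisj : Disjoint (Metric.ball 0 r) T :=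
    Set.disjoint_left.mpr fun x hx hxT => (hr x hxT).not_gt (mem_ball_zero_iff.mp hx)
  obtain ⟨f, u, hball, hfT⟩ :=
    geometric_hahn_banach_open (convex_ball 0 r) Metric.isOpen_ball hT hdisj
  have hu : 0 < u := by simpa using hball 0 (Metric.mem_ball_self hr0)
  have hpolar : u⁻¹ • f ∈ StrongDual.polar ℝ (Metric.ball (0 : E) r) := by
    refine NormedSpace.smul_mem_polar fun x hx => ?_
    have hneg := hball (-x) (by simpa using hx)
    rw [map_neg] at hneg
    rw [Real.norm_of_nonneg hu.le, Real.norm_eq_abs, abs_le]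
    exact ⟨by linarith, (hball x hx).le⟩
  rw [NormedSpace.polar_ball hr0, mem_closedBall_zero_iff] at hpolar
  refine ⟨r • u⁻¹ • f, ?_, fun x hx => ?_⟩
  · calc ‖r • u⁻¹ • f‖ = r * ‖u⁻¹ • f‖ := by rw [norm_smul, Real.norm_of_nonneg hr0.le]
      _ ≤ r * r⁻¹ := by gcongr
      _ = 1 := mul_inv_cancel₀ hr0.ne'
  · have : 1 ≤ u⁻¹ * f x := by rw [le_inv_mul_iff₀ hu, mul_one]; exact hfT x hx
    simpa using le_mul_of_one_le_right hr0.le this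

theorem exists_norm_le_one_forall_le_norm_apply_of_convex {𝕜 E : Type*} [RCLike 𝕜]
    [NormedAddCommGroup E] [NormedSpace 𝕜 E] [NormedSpace ℝ E] [IsScalarTower ℝ 𝕜 E]
    {T : Set E} (hT : Convex ℝ T) {r : ℝ} (hr : ∀ x ∈ T, r ≤ ‖x‖) :
    ∃ ψ : StrongDual 𝕜 E, ‖ψ‖ ≤ 1 ∧ ∀ x ∈ T, r ≤ ‖ψ x‖ := by
  obtain ⟨f, hf, hfT⟩ := exists_norm_le_one_forall_le_apply_of_convex hT hr
  refine ⟨f.extendRCLike, by rwa [StrongDual.norm_extendRCLike], fun x hx => ?_⟩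
  calc r ≤ f x := hfT x hx
    _ = RCLike.re (f.extendRCLike x : 𝕜) := (StrongDual.re_extendRCLike_apply f x).symm
    _ ≤ ‖(f.extendRCLike x : 𝕜)‖ := RCLike.re_le_norm _

theorem abs_e_eq_inf_of_right_stationary_general
    {A : Type*} [NormedRing A] [NormedAlgebra ℂ A]
    (e : A →L[ℂ] ℂ) (hmul : ∀ a b : A, e (a * b) = e a * e b)
    (P : Set A) (hP : P = {ν : A | e ν = 1 ∧ ‖ν‖ = 1})
    {ι : Type*} [Preorder ι] [Nonempty ι] [IsDirected ι (· ≤ ·)]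
    (ν' : ι → A) (hν' : ∀ i, ν' i ∈ P)
    (hstat : ∀ φ : A →L[ℂ] ℂ, ∃ c₀ : ℂ,
      ∀ μ : A, Tendsto (fun i => φ (μ * ν' i)) atTop (nhds (c₀ * e μ))) :
    ∀ μ : A, sInf ((fun ν => ‖μ * ν‖) '' P) ≠ 0 →
      ‖e μ‖ = sInf ((fun ν => ‖μ * ν‖) '' P) := by
  rintro μ -
  obtain ⟨i₀⟩ := ‹Nonempty ι›
  have he := e.norm_apply_le_of_map_mul hmul
  have hPconv : Convex ℝ P := hP ▸ convex_setOf_apply_eq_one_and_norm_eq_one e he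
  have hPe : ∀ ν ∈ P, e ν = 1 ∧ ‖ν‖ = 1 := by rw [hP]; exact fun _ => id
  set ζ := sInf ((fun ν => ‖μ * ν‖) '' P)
  have hζ_le : ∀ ν ∈ P, ζ ≤ ‖μ * ν‖ :=
    fun ν hν => csInf_le ⟨0, by rintro _ ⟨_, _, rfl⟩; positivity⟩ ⟨ν, hν, rfl⟩
  have hupper : ‖e μ‖ ≤ ζ := le_csInf ⟨_, _, hν' i₀, rfl⟩ <| Set.forall_mem_image.mpr
    fun ν hν => by simpa [hmul, (hPe ν hν).1] using he (μ * ν)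
  obtain ⟨ψ, hψ, hψζ⟩ := exists_norm_le_one_forall_le_norm_apply_of_convex (𝕜 := ℂ)
    (hPconv.linear_image (LinearMap.mulLeft ℝ μ)) (Set.forall_mem_image.mpr hζ_le)
  obtain ⟨c₀, hc₀⟩ := hstat ψ
  have hc₀_le : ‖c₀‖ ≤ 1 := by
    have hlim := (hc₀ (ν' i₀)).norm
    rw [(hPe _ (hν' i₀)).1, mul_one] at hlim
    refine le_of_tendsto hlim (Eventually.of_forall fun i => ?_)
    calc ‖ψ (ν' i₀ * ν' i)‖ ≤ ‖ψ‖ * (‖ν' i₀‖ * ‖ν' i‖) := ψ.le_opNorm_of_le (norm_mul_le _ _)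
      _ ≤ 1 := by rwa [(hPe _ (hν' i₀)).2, (hPe _ (hν' i)).2, mul_one, mul_one]
  have hlower := ge_of_tendsto (hc₀ μ).norm
    (Eventually.of_forall fun i => hψζ _ ⟨ν' i, hν' i, rfl⟩)
  rw [norm_mul] at hlower
  exact hupper.antisymm (hlower.trans (mul_le_of_le_one_left (norm_nonneg _) hc₀_le))

/-- If a Banach algebra `A` with nonzero multiplicative continuous functional `e` and
`P = {ν : e(ν) = 1, ‖ν‖ = 1}` (nonempty, closed under multiplication) is topological right
stationary — there is a net `(ν_α)` in `P` such that for each `φ ∈ A*` there is `c₀ ∈ ℂ`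
with `R_{ν_α} φ → c₀·e` weak* — then for every `μ ∈ A` with `inf {‖μν‖ : ν ∈ P} ≠ 0` one has
`|e(μ)| = inf {‖μν‖ : ν ∈ P}`. -/
theorem abs_e_eq_inf_of_right_stationary
    {A : Type*} [NormedRing A] [NormedAlgebra ℂ A] [CompleteSpace A]
    (e : A →L[ℂ] ℂ) (he : e ≠ 0) (hmul : ∀ a b : A, e (a * b) = e a * e b)
    (P : Set A) (hP : P = {ν : A | e ν = 1 ∧ ‖ν‖ = 1})
    (hPne : P.Nonempty) (hPmul : ∀ a ∈ P, ∀ b ∈ P, a * b ∈ P)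
    {ι : Type*} [Preorder ι] [Nonempty ι] [IsDirected ι (· ≤ ·)]
    (ν' : ι → A) (hν' : ∀ i, ν' i ∈ P)
    (hstat : ∀ φ : A →L[ℂ] ℂ, ∃ c₀ : ℂ,
      ∀ μ : A, Tendsto (fun i => φ (μ * ν' i)) atTop (nhds (c₀ * e μ))) :
    ∀ μ : A, sInf ((fun ν => ‖μ * ν‖) '' P) ≠ 0 →
      ‖e μ‖ = sInf ((fun ν => ‖μ * ν‖) '' P) :=
  abs_e_eq_inf_of_right_stationary_general e hmul P hP ν' hν' hstat
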